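/- The conditional state of the dishonest parties in the GHZ mean-estimation protocol depends on the honest parameters {θ_μ}_{μ∈H} only through their sum Σ_{μ∈H} θ_μ: if Σ_{μ∈H} θ_μ = Σ_{μ∈H} θ'_μ (mod 2π), then the joint distribution of (h, post-measurement state on D) is identical for parameter vectors θ_H and θ'_H. -/

import Mathlib

open scoped BigOperators

/-- Amplitude `⟨v|x_b⟩` of `|+⟩` (`b = false`) / `|−⟩` (`b = true`) in the
computational basis. -/
noncomputable def xAmp (b : Bool) (v : Fin 2) : ℂ :=
  (if b = true ∧ v = 1 then -1 else 1) / (Real.sqrt 2 : ℂ)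

/-- The `n`-qubit GHZ state `(|0⟩^⊗n + |1⟩^⊗n)/√2`. -/
noncomputable def ghz (n : ℕ) : (Fin n → Fin 2) → ℂ := fun z =>
  if z = (fun _ => 0) ∨ z = (fun _ => 1) then ((Real.sqrt 2 : ℂ))⁻¹ else 0

/-- The GHZ state after the parties in `H` apply the local phase unitaries
`U(θ_μ) = |0⟩⟨0| + e^{iθ_μ}|1⟩⟨1|`. -/
noncomputable def encoded (n : ℕ) (H : Finset (Fin n)) (θ : Fin n → ℝ) :
    (Fin n → Fin 2) → ℂ := fun z =>
  (∏ μ ∈ H, if z μ = 1 then Complex.exp (Complex.I * Complex.ofReal (θ μ)) else 1)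
    * ghz n z

/-- Combine a computational-basis label on `H` and one on `Hᶜ` into a label on
all `n` qubits. -/
def mergeLabel (n : ℕ) (H : Finset (Fin n))
    (u : {μ // μ ∈ H} → Fin 2) (w : {μ // μ ∈ Hᶜ} → Fin 2) : Fin n → Fin 2 :=
  fun μ => if h : μ ∈ H then u ⟨μ, h⟩ else w ⟨μ, Finset.mem_compl.mpr h⟩

/-- The (unnormalized) post-measurement state on the parties `D = Hᶜ` after the
parties in `H` measure their qubits of the encoded GHZ state in the X basis,
obtaining outcomes `s` (with `s μ = true` meaning outcome `|−⟩`). -/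
noncomputable def postState (n : ℕ) (H : Finset (Fin n)) (θ : Fin n → ℝ)
    (s : {μ // μ ∈ H} → Bool) (w : {μ // μ ∈ Hᶜ} → Fin 2) : ℂ :=
  ∑ u : {μ // μ ∈ H} → Fin 2,
    (∏ μ : {μ // μ ∈ H}, xAmp (s μ) (u μ)) * encoded n H θ (mergeLabel n H u w)

theorem Complex.exp_I_mul_eq_of_sub_eq_two_pi_mul_int {a b : ℝ} {k : ℤ}
    (h : b - a = 2 * Real.pi * k) :
    Complex.exp (Complex.I * a) = Complex.exp (Complex.I * b) :=
  Complex.exp_eq_exp_iff_exists_int.2 ⟨-k, by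
    rw [show a = b - 2 * Real.pi * k by linarith]
    push_cast
    ring⟩

/-- Only the all-ones branch of the GHZ state picks up a phase, namely `exp (i Σ_{μ∈H} θ_μ)`. -/
theorem encoded_eq_of_exp_sum_eq {n : ℕ} {H : Finset (Fin n)} {θ θ' : Fin n → ℝ}
    (h : Complex.exp (Complex.I * ↑(∑ μ ∈ H, θ μ)) =
      Complex.exp (Complex.I * ↑(∑ μ ∈ H, θ' μ))) :
    encoded n H θ = encoded n H θ' := by
  funext z
  unfold encoded ghz
  split_ifs with hz
  · rcases hz with rfl | rfl
    · simp
    · push_cast at h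
      simpa [← Complex.exp_sum, Finset.mul_sum] using congrArg (· * (Real.sqrt 2 : ℂ)⁻¹) h
  · simp

theorem stmt16_general (n : ℕ) (H : Finset (Fin n)) (θ θ' : Fin n → ℝ)
    (hsum : ∃ k : ℤ, (∑ μ ∈ H, θ' μ) - (∑ μ ∈ H, θ μ) = 2 * Real.pi * k) :
    ∀ (s : {μ // μ ∈ H} → Bool) (w : {μ // μ ∈ Hᶜ} → Fin 2),
      postState n H θ s w = postState n H θ' s w := by
  obtain ⟨k, hk⟩ := hsum
  intro s w
  rw [postState, postState,
    encoded_eq_of_exp_sum_eq (Complex.exp_I_mul_eq_of_sub_eq_two_pi_mul_int hk)]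

/-- The conditional state of the dishonest parties `D = Hᶜ` in the GHZ
mean-estimation protocol depends on the honest parameters `{θ_μ}_{μ∈H}` only
through their sum: if `Σ_{μ∈H} θ'_μ − Σ_{μ∈H} θ_μ` is an integer multiple of
`2π`, then for every outcome `s` the (unnormalized) post-measurement state on
`D` — and hence the joint distribution of (parity, post-measurement state) —
is identical for `θ` and `θ'`. -/
theorem stmt16 (n : ℕ) (H : Finset (Fin n)) (θ θ' : Fin n → ℝ)
    (hH : H.Nonempty) (hD : Hᶜ.Nonempty)
    (hsum : ∃ k : ℤ, (∑ μ ∈ H, θ' μ) - (∑ μ ∈ H, θ μ) = 2 * Real.pi * k) :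
    ∀ (s : {μ // μ ∈ H} → Bool) (w : {μ // μ ∈ Hᶜ} → Fin 2),
      postState n H θ s w = postState n H θ' s w :=
  stmt16_general n H θ θ' hsum
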